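/- Let 𝒜 = ⟨A,R⟩ be an almost bounded structure and 𝒜^* = ∏_I 𝒜/𝒟 any ultrapower of 𝒜. For s,t ∈ A with diagonal images [c_s]_𝒟, [c_t]_𝒟 and for non-diagonal elements [a]_𝒟, [b]_𝒟 ∈ A^*: (i) R^*([c_s],[c_t]) iff S^*([c_s],[c_t]) or P^*([c_s],[c_t]); (ii) R^*([c_s],[a]) iff P^*([c_s],[a]), and R^*([a],[c_s]) iff P^*([a],[c_s]); (iii) R^*([a],[b]) iff S^*([a],[b]). -/
import Mathlib


open FirstOrder Cardinal

namespace UEx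

/-- Elements of infinite in- or out-degree. -/
def RInf (R : A → A → Prop) : Set A :=
  {w | {v | R w v}.Infinite ∨ {v | R v w}.Infinite}

/-- A uniform finite bound on all in- and out-degrees. -/
def Bounded (R : A → A → Prop) : Prop :=
  ∃ n : ℕ, ∀ w : A, {v | R w v}.Finite ∧ {v | R v w}.Finite ∧
    {v | R w v}.ncard ≤ n ∧ {v | R v w}.ncard ≤ n

/-- Almost bounded: finitely many elements of infinite degree, and a uniform
finite bound on the degrees of the remaining elements. -/
def AlmostBounded (R : A → A → Prop) : Prop :=
  (RInf R).Finite ∧ ∃ n : ℕ, ∀ w ∉ RInf R,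
    {v | R w v}.ncard ≤ n ∧ {v | R v w}.ncard ≤ n

/-- P = {(s,t) ∈ R : s ∈ R∞ or t ∈ R∞}. -/
def PRel (R : A → A → Prop) (s t : A) : Prop := R s t ∧ (s ∈ RInf R ∨ t ∈ RInf R)

/-- S = R \ P. -/
def SRel (R : A → A → Prop) (s t : A) : Prop := R s t ∧ ¬(s ∈ RInf R ∨ t ∈ RInf R)

/-- The ultrafilter extension of a binary relation. -/
def ueRel (Q : A → A → Prop) (u v : Ultrafilter A) : Prop :=
  ∀ X ∈ v, {w | ∃ s ∈ X, Q w s} ∈ u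

/-- The setoid of 𝒟-a.e. equality on `I → A`. -/
def upSetoid (𝒟 : Ultrafilter I) (A : Type*) : Setoid (I → A) where
  r a b := {i | a i = b i} ∈ 𝒟
  iseqv := by
    refine ⟨fun a => ?_, fun {a b} h => ?_, fun {a b c} h1 h2 => ?_⟩
    · have : {i | a i = a i} = (Set.univ : Set I) := by simp
      rw [this]
      exact Filter.univ_mem
    · exact Filter.mem_of_superset h fun i hi => (hi : _ = _).symm
    · exact Filter.mem_of_superset (Filter.inter_mem h1 h2) fun i hi =>
        (hi.1 : _ = _).trans hi.2

/-- The ultrapower of `A` modulo the ultrafilter `𝒟`. -/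
def UP (𝒟 : Ultrafilter I) (A : Type*) : Type _ := Quotient (upSetoid 𝒟 A)

/-- The diagonal embedding into the ultrapower. -/
def diag (𝒟 : Ultrafilter I) (a : A) : UP 𝒟 A := Quotient.mk (upSetoid 𝒟 A) fun _ => a

/-- The relation on the ultrapower given by Łoś's theorem. -/
def upRel (𝒟 : Ultrafilter I) (Q : A → A → Prop) : UP 𝒟 A → UP 𝒟 A → Prop :=
  Quotient.lift₂ (fun a b => {i | Q (a i) (b i)} ∈ 𝒟) <| by
    intro a b a' b' ha hb
    have ha' : {i | a i = a' i} ∈ 𝒟 := ha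
    have hb' : {i | b i = b' i} ∈ 𝒟 := hb
    refine propext ⟨fun h => ?_, fun h => ?_⟩
    · refine Filter.mem_of_superset (Filter.inter_mem (Filter.inter_mem h ha') hb') ?_
      rintro i ⟨⟨h1, h2⟩, h3⟩
      simp only [Set.mem_setOf_eq] at *
      rw [← h2, ← h3]; exact h1
    · refine Filter.mem_of_superset (Filter.inter_mem (Filter.inter_mem h ha') hb') ?_
      rintro i ⟨⟨h1, h2⟩, h3⟩
      simp only [Set.mem_setOf_eq] at *
      rw [h2, h3]; exact h1

/-- `𝒟` is `κ`-regular. -/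
def IsRegular (𝒟 : Ultrafilter I) (κ : Cardinal) : Prop :=
  ∃ E : Set (Set I), (∀ X ∈ E, X ∈ 𝒟) ∧ #E = κ ∧ ∀ i : I, {X ∈ E | i ∈ X}.Finite
lemma const_mem_iff {I : Type*} (𝒟 : Ultrafilter I) (p : Prop) :
    {_i : I | p} ∈ 𝒟 ↔ p := by
  by_cases hp : p
  · have h1 : {_i : I | p} = Set.univ := Set.eq_univ_of_forall fun _ => hp
    rw [h1]; exact iff_of_true Filter.univ_mem hp
  · have h1 : {_i : I | p} = ∅ := by ext i; simpa
    rw [h1]; exact iff_of_false (fun hc => Ultrafilter.empty_notMem hc) hp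

lemma up_pigeon {I A : Type*} (𝒟 : Ultrafilter I) (a : I → A) {F : Set A}
    (hF : F.Finite) (h : {i | a i ∈ F} ∈ 𝒟) : ∃ v ∈ F, {i | a i = v} ∈ 𝒟 := by
  have he : {i | a i ∈ F} = ⋃ v ∈ F, {i | a i = v} := by ext i; simp
  rw [he] at h
  exact (Ultrafilter.finite_biUnion_mem_iff hF).mp h

lemma nondiag_nin {I A : Type*} (𝒟 : Ultrafilter I) (a : I → A)
    (ha : (Quotient.mk (upSetoid 𝒟 A) a) ∉ Set.range (diag 𝒟 : A → UP 𝒟 A))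
    {F : Set A} (hF : F.Finite) : {i | a i ∉ F} ∈ 𝒟 := by
  by_contra hc
  have h' : {i | a i ∈ F} ∈ 𝒟 := by
    have := (Ultrafilter.compl_mem_iff_notMem (s := {i | a i ∉ F}) (f := 𝒟)).mpr hc
    convert this using 1
    ext i; simp
  obtain ⟨v, _, hv⟩ := up_pigeon 𝒟 a hF h'
  exact ha ⟨v, Eq.symm (Quotient.sound (by exact hv))⟩

lemma rinf_fin {A : Type*} {R : A → A → Prop} {s : A} (hs : s ∉ RInf R) :
    {v | R s v}.Finite ∧ {v | R v s}.Finite := by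
  simp only [RInf, Set.mem_setOf_eq, not_or, Set.not_infinite] at hs
  exact hs

/-- The decomposition `R = S ∪ P` is coherent with ultrapowers: (i) between diagonal
elements `R^*` is `S^* ∪ P^*`; (ii) between a diagonal and a non-diagonal element it
is `P^*`; (iii) between non-diagonal elements it is `S^*`. -/
theorem prop_iso_up {A I : Type*} [Infinite I] (R : A → A → Prop)
    (𝒟 : Ultrafilter I) (h : AlmostBounded R) (s t : A) (a b : UP 𝒟 A)
    (ha : a ∉ Set.range (diag 𝒟 : A → UP 𝒟 A))
    (hb : b ∉ Set.range (diag 𝒟 : A → UP 𝒟 A)) :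
    (upRel 𝒟 R (diag 𝒟 s) (diag 𝒟 t) ↔
      upRel 𝒟 (SRel R) (diag 𝒟 s) (diag 𝒟 t) ∨ upRel 𝒟 (PRel R) (diag 𝒟 s) (diag 𝒟 t)) ∧
    (upRel 𝒟 R (diag 𝒟 s) a ↔ upRel 𝒟 (PRel R) (diag 𝒟 s) a) ∧
    (upRel 𝒟 R a (diag 𝒟 s) ↔ upRel 𝒟 (PRel R) a (diag 𝒟 s)) ∧
    (upRel 𝒟 R a b ↔ upRel 𝒟 (SRel R) a b) := by
  obtain ⟨fa, rfl⟩ := Quotient.exists_rep a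
  obtain ⟨fb, rfl⟩ := Quotient.exists_rep b
  refine ⟨?_, ?_, ?_, ?_⟩
  · show {_i : I | R s t} ∈ 𝒟 ↔ {_i : I | SRel R s t} ∈ 𝒟 ∨ {_i : I | PRel R s t} ∈ 𝒟
    rw [const_mem_iff, const_mem_iff, const_mem_iff]
    unfold SRel PRel
    constructor
    · intro hR
      by_cases hc : s ∈ RInf R ∨ t ∈ RInf R
      · exact Or.inr ⟨hR, hc⟩
      · exact Or.inl ⟨hR, hc⟩
    · rintro (⟨h1, _⟩ | ⟨h1, _⟩) <;> exact h1
  · show {i | R s (fa i)} ∈ 𝒟 ↔ {i | PRel R s (fa i)} ∈ 𝒟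
    constructor
    · intro hR
      by_cases hs : s ∈ RInf R
      · exact Filter.mem_of_superset hR fun i hi => ⟨hi, Or.inl hs⟩
      · exfalso
        have hfin := (rinf_fin hs).1
        have hnin := nondiag_nin 𝒟 fa ha hfin
        obtain ⟨i, hi1, hi2⟩ := Ultrafilter.nonempty_of_mem (Filter.inter_mem hR hnin)
        exact hi2 hi1
    · exact fun hP => Filter.mem_of_superset hP fun i hi => hi.1
  · show {i | R (fa i) s} ∈ 𝒟 ↔ {i | PRel R (fa i) s} ∈ 𝒟
    constructor
    · intro hR
      by_cases hs : s ∈ RInf R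
      · exact Filter.mem_of_superset hR fun i hi => ⟨hi, Or.inr hs⟩
      · exfalso
        have hfin := (rinf_fin hs).2
        have hnin := nondiag_nin 𝒟 fa ha hfin
        obtain ⟨i, hi1, hi2⟩ := Ultrafilter.nonempty_of_mem (Filter.inter_mem hR hnin)
        exact hi2 hi1
    · exact fun hP => Filter.mem_of_superset hP fun i hi => hi.1
  · show {i | R (fa i) (fb i)} ∈ 𝒟 ↔ {i | SRel R (fa i) (fb i)} ∈ 𝒟
    constructor
    · intro hR
      have hna := nondiag_nin 𝒟 fa ha h.1
      have hnb := nondiag_nin 𝒟 fb hb h.1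
      refine Filter.mem_of_superset (Filter.inter_mem (Filter.inter_mem hR hna) hnb) ?_
      rintro i ⟨⟨h1, h2⟩, h3⟩
      exact ⟨h1, fun hc => hc.elim h2 h3⟩
    · exact fun hS => Filter.mem_of_superset hS fun i hi => hi.1

end UEx
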